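/- The operator norm (with respect to the Euclidean norm on ℝᵐ) of the difference S_m − A_mᵀ A_m satisfies ‖S_m − A_mᵀ A_m‖ ≤ C_K²/(6m²). -/

import Mathlib

open Real MeasureTheory Matrix

def I01 : Set ℝ := Set.Icc 0 1

/-- `κ : [0,1]² → ℝ` is twice continuously differentiable, with partial derivatives
`κ10 = ∂ₓκ`, `κ01 = ∂ᵧκ`, `κ20 = ∂ₓ²κ`, `κ11 = ∂ₓ∂ᵧκ`, `κ02 = ∂ᵧ²κ`, and
`CK` bounds the absolute values of `κ` and all its partial derivatives of order `≤ 2`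
on `[0,1]²` (in the paper, `CK` is the supremum of these quantities). -/
def IsC2KernelWith (κ κ10 κ01 κ20 κ11 κ02 : ℝ → ℝ → ℝ) (CK : ℝ) : Prop :=
  (∀ x ∈ I01, ∀ y ∈ I01, HasDerivWithinAt (fun x' => κ x' y) (κ10 x y) I01 x) ∧
  (∀ x ∈ I01, ∀ y ∈ I01, HasDerivWithinAt (fun y' => κ x y') (κ01 x y) I01 y) ∧
  (∀ x ∈ I01, ∀ y ∈ I01, HasDerivWithinAt (fun x' => κ10 x' y) (κ20 x y) I01 x) ∧
  (∀ x ∈ I01, ∀ y ∈ I01, HasDerivWithinAt (fun y' => κ10 x y') (κ11 x y) I01 y) ∧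
  (∀ x ∈ I01, ∀ y ∈ I01, HasDerivWithinAt (fun y' => κ01 x y') (κ02 x y) I01 y) ∧
  ContinuousOn (fun p : ℝ × ℝ => κ p.1 p.2) (I01 ×ˢ I01) ∧
  ContinuousOn (fun p : ℝ × ℝ => κ10 p.1 p.2) (I01 ×ˢ I01) ∧
  ContinuousOn (fun p : ℝ × ℝ => κ01 p.1 p.2) (I01 ×ˢ I01) ∧
  ContinuousOn (fun p : ℝ × ℝ => κ20 p.1 p.2) (I01 ×ˢ I01) ∧
  ContinuousOn (fun p : ℝ × ℝ => κ11 p.1 p.2) (I01 ×ˢ I01) ∧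
  ContinuousOn (fun p : ℝ × ℝ => κ02 p.1 p.2) (I01 ×ˢ I01) ∧
  (∀ x ∈ I01, ∀ y ∈ I01,
    |κ x y| ≤ CK ∧ |κ10 x y| ≤ CK ∧ |κ01 x y| ≤ CK ∧
    |κ20 x y| ≤ CK ∧ |κ11 x y| ≤ CK ∧ |κ02 x y| ≤ CK)

/-- The midpoint grid points `ξ_{l,m} = (2l−1)/(2m)`. -/
noncomputable def gridPt (m l : ℕ) : ℝ := (2 * (l : ℝ) - 1) / (2 * (m : ℝ))

/-!
Entrywise, `(S_m - A_mᵀ A_m)_{ij}` is `1/m` times the error of the composite midpoint rule with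
`m` cells applied to `x ↦ κ(x, ξ_i) κ(x, ξ_j)`, whose second derivative is bounded by `4 C_K²`.
The midpoint rule on a cell of width `h` errs by at most `M h³ / 24` (the linear Taylor term at the
midpoint integrates to zero), so each entry is at most `C_K² / (6 m³)`. By Cauchy–Schwarz, an
`m × m` matrix whose entries are bounded by `c` has Euclidean operator norm at most `m c`.
-/

open intervalIntegral Set Filter Topology

section MidpointRule

variable {f f' f'' : ℝ → ℝ} {s : Set ℝ} {M : ℝ}

lemma abs_integral_abs_sub (c x : ℝ) : |∫ t in c..x, (|t - c|)| = (x - c) ^ 2 / 2 := by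
  rw [integral_comp_sub_right (fun t => |t|), sub_self]
  rcases le_total 0 (x - c) with h | h
  · rw [integral_congr (g := fun t => t) fun t ht => abs_of_nonneg (uIcc_of_le h ▸ ht).1,
      integral_id]
    simp [abs_of_nonneg, sq_nonneg, div_nonneg]
  · rw [integral_congr (g := fun t => -t) fun t ht => abs_of_nonpos (uIcc_of_ge h ▸ ht).2,
      intervalIntegral.integral_neg, integral_id]
    simp [abs_of_nonneg, sq_nonneg, div_nonneg]

lemma Convex.abs_sub_sub_mul_le (hs : Convex ℝ s)
    (hf : ∀ x ∈ s, HasDerivWithinAt f (f' x) s x)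
    (hf' : ∀ x ∈ s, HasDerivWithinAt f' (f'' x) s x) (hf'' : ∀ x ∈ s, |f'' x| ≤ M)
    {c x : ℝ} (hc : c ∈ s) (hx : x ∈ s) :
    |f x - f c - f' c * (x - c)| ≤ M / 2 * (x - c) ^ 2 := by
  have hM : 0 ≤ M := (abs_nonneg _).trans (hf'' c hc)
  have hcx : uIcc c x ⊆ s := hs.ordConnected.uIcc_subset hc hx
  have hg : ∀ t ∈ s, HasDerivWithinAt (fun t => f t - f' c * t) (f' t - f' c) s t := fun t ht =>
    (hf t ht).sub (by simpa using (hasDerivWithinAt_id t s).const_mul (f' c))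
  have hf'cont : ContinuousOn f' s := fun t ht => (hf' t ht).continuousWithinAt
  have hftc : ∫ t in c..x, (f' t - f' c) = f x - f c - f' c * (x - c) := by
    rw [integral_eq_sub_of_hasDeriv_right (f := fun t => f t - f' c * t)
      (f' := fun t => f' t - f' c)
      (fun t ht => (hg t (hcx ht)).continuousWithinAt.mono hcx) (fun t ht => ?_)
      ((hf'cont.sub continuousOn_const).mono hcx).intervalIntegrable]
    · ring
    · have hts : s ∈ 𝓝 t := mem_of_superset (isOpen_Ioo.mem_nhds ht)
        (Ioo_subset_Icc_self.trans hcx)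
      exact ((hg t (mem_of_mem_nhds hts)).hasDerivAt hts).hasDerivWithinAt
  have hlip : ∀ t ∈ uIcc c x, ‖f' t - f' c‖ ≤ M * |t - c| := fun t ht =>
    norm_image_sub_le_of_norm_hasDerivWithin_le hf' hf'' hs hc (hcx ht)
  calc |f x - f c - f' c * (x - c)| = ‖∫ t in c..x, (f' t - f' c)‖ := by rw [hftc, Real.norm_eq_abs]
    _ ≤ |∫ t in c..x, M * (|t - c|)| :=
        norm_integral_le_abs_of_norm_le
          (ae_restrict_of_forall_mem measurableSet_uIoc fun t ht => hlip t (uIoc_subset_uIcc ht))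
          ((by fun_prop : Continuous fun t => M * |t - c|).intervalIntegrable _ _)
    _ = M / 2 * (x - c) ^ 2 := by
        rw [intervalIntegral.integral_const_mul, abs_mul, abs_of_nonneg hM, abs_integral_abs_sub]
        ring

lemma Convex.abs_integral_sub_mul_midpoint_le (hs : Convex ℝ s)
    (hf : ∀ x ∈ s, HasDerivWithinAt f (f' x) s x)
    (hf' : ∀ x ∈ s, HasDerivWithinAt f' (f'' x) s x) (hf'' : ∀ x ∈ s, |f'' x| ≤ M)
    {a b : ℝ} (hab : a ≤ b) (ha : a ∈ s) (hb : b ∈ s) :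
    |(∫ x in a..b, f x) - (b - a) * f ((a + b) / 2)| ≤ M * (b - a) ^ 3 / 24 := by
  set c := (a + b) / 2
  have hab_s : uIcc a b ⊆ s := hs.ordConnected.uIcc_subset ha hb
  have hc : c ∈ s :=
    hab_s (Icc_subset_uIcc ⟨by simp only [c]; linarith, by simp only [c]; linarith⟩)
  have hfint : IntervalIntegrable f volume a b :=
    (ContinuousOn.mono (fun t ht => (hf t ht).continuousWithinAt) hab_s).intervalIntegrable
  have hlin : ∫ x in a..b, (f x - f c - f' c * (x - c)) = (∫ x in a..b, f x) - (b - a) * f c := by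
    rw [intervalIntegral.integral_sub (hfint.sub intervalIntegrable_const)
      ((by fun_prop : Continuous fun x => f' c * (x - c)).intervalIntegrable _ _),
      intervalIntegral.integral_sub hfint intervalIntegrable_const,
      intervalIntegral.integral_const_mul, integral_comp_sub_right (fun x => x), integral_id,
      intervalIntegral.integral_const, smul_eq_mul]
    ring
  calc |(∫ x in a..b, f x) - (b - a) * f c| = ‖∫ x in a..b, (f x - f c - f' c * (x - c))‖ := by
        rw [hlin, Real.norm_eq_abs]
    _ ≤ ∫ x in a..b, M / 2 * (x - c) ^ 2 :=
        intervalIntegral.norm_integral_le_of_norm_le hab (ae_of_all _ fun x hx =>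
          hs.abs_sub_sub_mul_le hf hf' hf'' hc (hab_s (Icc_subset_uIcc (Ioc_subset_Icc_self hx))))
          ((by fun_prop : Continuous fun x => M / 2 * (x - c) ^ 2).intervalIntegrable _ _)
    _ = M * (b - a) ^ 3 / 24 := by
        rw [intervalIntegral.integral_const_mul, integral_comp_sub_right (fun x => x ^ 2),
          integral_pow]
        ring

lemma gridPt_mem_I01 {m l : ℕ} (hl : 1 ≤ l) (hlm : l ≤ m) : gridPt m l ∈ I01 := by
  have hl' : (1 : ℝ) ≤ l := by exact_mod_cast hl
  have hlm' : (l : ℝ) ≤ m := by exact_mod_cast hlm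
  unfold gridPt
  constructor
  · apply div_nonneg <;> linarith
  · rw [div_le_one (by linarith)]
    linarith

lemma abs_integral_sub_midpoint_sum_le {m : ℕ} (hm : 0 < m)
    (hf : ∀ x ∈ I01, HasDerivWithinAt f (f' x) I01 x)
    (hf' : ∀ x ∈ I01, HasDerivWithinAt f' (f'' x) I01 x) (hf'' : ∀ x ∈ I01, |f'' x| ≤ M) :
    |(∫ x in (0 : ℝ)..1, f x) - ∑ l : Fin m, f (gridPt m (l + 1)) / m| ≤ M / (24 * m ^ 2) := by
  have hm' : (0 : ℝ) < m := by exact_mod_cast hm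
  set node : ℕ → ℝ := fun k => k / m
  have hnode : ∀ k ≤ m, node k ∈ I01 := fun k hk =>
    ⟨by positivity, div_le_one_of_le₀ (by exact_mod_cast hk) hm'.le⟩
  have hstep : ∀ k, node (k + 1) - node k = 1 / m := fun k => by
    simp only [node]; push_cast; ring
  have hmid : ∀ k, (node k + node (k + 1)) / 2 = gridPt m (k + 1) := fun k => by
    simp only [node, gridPt]; push_cast; field_simp; ring
  have hsplit :
      ∑ k ∈ Finset.range m, ∫ x in node k..node (k + 1), f x = ∫ x in (0 : ℝ)..1, f x := by
    rw [sum_integral_adjacent_intervals fun k hk => ?_]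
    · simp [node, hm'.ne']
    · exact (ContinuousOn.mono (fun t ht => (hf t ht).continuousWithinAt)
        (uIcc_subset_Icc (hnode k hk.le) (hnode (k + 1) hk))).intervalIntegrable
  have hlocal : ∀ k ∈ Finset.range m,
      |(∫ x in node k..node (k + 1), f x) - f (gridPt m (k + 1)) / m| ≤ M / (24 * m ^ 3) := by
    intro k hk
    have := (convex_Icc (0 : ℝ) 1).abs_integral_sub_mul_midpoint_le hf hf' hf''
      (by simp only [node]; gcongr; simp) (hnode k (Finset.mem_range.1 hk).le)
      (hnode (k + 1) (Finset.mem_range.1 hk))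
    rw [hstep, hmid] at this
    convert this using 1 <;> field_simp
  rw [Fin.sum_univ_eq_sum_range (fun l => f (gridPt m (l + 1)) / m), ← hsplit,
    ← Finset.sum_sub_distrib]
  calc _ ≤ ∑ k ∈ Finset.range m, |(∫ x in node k..node (k + 1), f x) - f (gridPt m (k + 1)) / m| :=
        Finset.abs_sum_le_sum_abs _ _
    _ ≤ ∑ _k ∈ Finset.range m, M / (24 * m ^ 3) := Finset.sum_le_sum hlocal
    _ = M / (24 * m ^ 2) := by
        rw [Finset.sum_const, Finset.card_range, nsmul_eq_mul]
        field_simp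

end MidpointRule

lemma Matrix.sum_sq_mulVec_le {m n : Type*} [Fintype m] [Fintype n] (E : Matrix m n ℝ) {c : ℝ}
    (hE : ∀ i j, |E i j| ≤ c) (w : n → ℝ) :
    ∑ i, (E *ᵥ w) i ^ 2 ≤ Fintype.card m * Fintype.card n * c ^ 2 * ∑ j, w j ^ 2 := by
  have hrow : ∀ i, (E *ᵥ w) i ^ 2 ≤ Fintype.card n * c ^ 2 * ∑ j, w j ^ 2 := fun i =>
    calc (E *ᵥ w) i ^ 2 ≤ (∑ j, E i j ^ 2) * ∑ j, w j ^ 2 :=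
          Finset.sum_mul_sq_le_sq_mul_sq _ _ _
      _ ≤ (∑ _j : n, c ^ 2) * ∑ j, w j ^ 2 := by
          refine mul_le_mul_of_nonneg_right (Finset.sum_le_sum fun j _ => ?_) (by positivity)
          exact sq_le_sq' (abs_le.1 (hE i j)).1 (abs_le.1 (hE i j)).2
      _ = Fintype.card n * c ^ 2 * ∑ j, w j ^ 2 := by simp
  calc ∑ i, (E *ᵥ w) i ^ 2 ≤ ∑ _i : m, Fintype.card n * c ^ 2 * ∑ j, w j ^ 2 :=
        Finset.sum_le_sum fun i _ => hrow i
    _ = _ := by simp [mul_assoc]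

namespace IsC2KernelWith

variable {κ κ10 κ01 κ20 κ11 κ02 : ℝ → ℝ → ℝ} {CK : ℝ}

lemma nonneg (hκ : IsC2KernelWith κ κ10 κ01 κ20 κ11 κ02 CK) : 0 ≤ CK :=
  (abs_nonneg _).trans (hκ.2.2.2.2.2.2.2.2.2.2.2 0 ⟨le_rfl, zero_le_one⟩ 0 ⟨le_rfl, zero_le_one⟩).1

lemma abs_integral_mul_sub_midpoint_sum_le (hκ : IsC2KernelWith κ κ10 κ01 κ20 κ11 κ02 CK)
    {y y' : ℝ} (hy : y ∈ I01) (hy' : y' ∈ I01) {m : ℕ} (hm : 0 < m) :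
    |(∫ x in (0 : ℝ)..1, κ x y * κ x y') -
        ∑ l : Fin m, κ (gridPt m (l + 1)) y * κ (gridPt m (l + 1)) y' / m|
      ≤ CK ^ 2 / (6 * m ^ 2) := by
  obtain ⟨hd10, -, hd20, -, -, -, -, -, -, -, -, hbd⟩ := hκ
  have h := abs_integral_sub_midpoint_sum_le (f := fun x => κ x y * κ x y') (M := 4 * CK ^ 2) hm
    (fun x hx => (hd10 x hx y hy).mul (hd10 x hx y' hy'))
    (fun x hx => ((hd20 x hx y hy).mul (hd10 x hx y' hy')).add
      ((hd10 x hx y hy).mul (hd20 x hx y' hy'))) fun x hx => ?_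
  · exact h.trans_eq (by ring)
  · obtain ⟨h0, h10, -, h20, -, -⟩ := hbd x hx y hy
    obtain ⟨h0', h10', -, h20', -, -⟩ := hbd x hx y' hy'
    rw [abs_le] at h0 h10 h20 h0' h10' h20' ⊢
    constructor <;> nlinarith

lemma abs_sub_transpose_mul_apply_le (hκ : IsC2KernelWith κ κ10 κ01 κ20 κ11 κ02 CK) {m : ℕ}
    {A S : Matrix (Fin m) (Fin m) ℝ}
    (hA : ∀ i j : Fin m, A i j = κ (gridPt m (i + 1)) (gridPt m (j + 1)) / m)
    (hS : ∀ i j : Fin m,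
      S i j = 1 / m * ∫ x in (0 : ℝ)..1, κ x (gridPt m (i + 1)) * κ x (gridPt m (j + 1)))
    (i j : Fin m) :
    |(S - Aᵀ * A) i j| ≤ CK ^ 2 / (6 * m ^ 3) := by
  have hm : 0 < m := i.pos
  have hentry : (S - Aᵀ * A) i j = 1 / m * ((∫ x in (0 : ℝ)..1,
      κ x (gridPt m (i + 1)) * κ x (gridPt m (j + 1))) -
      ∑ l : Fin m,
        κ (gridPt m (l + 1)) (gridPt m (i + 1)) * κ (gridPt m (l + 1)) (gridPt m (j + 1)) / m) := by
    simp only [Matrix.sub_apply, mul_apply, transpose_apply, hA, hS, mul_sub, Finset.mul_sum]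
    congr 1
    refine Finset.sum_congr rfl fun l _ => ?_
    ring
  rw [hentry, abs_mul, abs_of_pos (by positivity)]
  calc _ ≤ 1 / (m : ℝ) * (CK ^ 2 / (6 * m ^ 2)) := by
        gcongr
        exact hκ.abs_integral_mul_sub_midpoint_sum_le (gridPt_mem_I01 le_add_self i.2)
          (gridPt_mem_I01 le_add_self j.2) hm
    _ = CK ^ 2 / (6 * m ^ 3) := by field_simp

end IsC2KernelWith

theorem stmt_8_general (κ κ10 κ01 κ20 κ11 κ02 : ℝ → ℝ → ℝ) (CK : ℝ)
    (hker : IsC2KernelWith κ κ10 κ01 κ20 κ11 κ02 CK)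
    (m : ℕ)
    (A S : Matrix (Fin m) (Fin m) ℝ)
    (hA : ∀ i j : Fin m, A i j = κ (gridPt m ((i : ℕ) + 1)) (gridPt m ((j : ℕ) + 1)) / m)
    (hS : ∀ i j : Fin m, S i j =
      (1 / (m : ℝ)) * ∫ x in (0:ℝ)..1, κ x (gridPt m ((i : ℕ) + 1)) * κ x (gridPt m ((j : ℕ) + 1))) :
    ∀ w : Fin m → ℝ,
      Real.sqrt (∑ i, ((S - Aᵀ * A).mulVec w i) ^ 2)
        ≤ CK ^ 2 / (6 * (m : ℝ) ^ 2) * Real.sqrt (∑ i, w i ^ 2) := by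
  intro w
  have hscale : (m : ℝ) * (CK ^ 2 / (6 * m ^ 3)) = CK ^ 2 / (6 * m ^ 2) := by
    rcases m.eq_zero_or_pos with rfl | hm
    · simp
    · field_simp
  have h := (S - Aᵀ * A).sum_sq_mulVec_le (hker.abs_sub_transpose_mul_apply_le hA hS) w
  rw [Fintype.card_fin] at h
  calc √(∑ i, (S - Aᵀ * A).mulVec w i ^ 2)
      ≤ √((m * (CK ^ 2 / (6 * m ^ 3))) ^ 2 * ∑ i, w i ^ 2) :=
        Real.sqrt_le_sqrt (h.trans_eq (by ring))
    _ = CK ^ 2 / (6 * (m : ℝ) ^ 2) * √(∑ i, w i ^ 2) := by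
        rw [Real.sqrt_mul (by positivity), Real.sqrt_sq (by have := hker.nonneg; positivity),
          hscale]

/-- The operator norm (w.r.t. the Euclidean norm on `ℝᵐ`) of
`S_m − A_mᵀA_m` is at most `C_K²/(6m²)`, where `(A_m)_{ij} = κ(ξ_{i,m},ξ_{j,m})/m` and
`(S_m)_{ij} = (1/m)∫₀¹ κ(x,ξ_{i,m})κ(x,ξ_{j,m}) dx`; equivalently, for every `w ∈ ℝᵐ`,
`‖(S_m − A_mᵀA_m)w‖ ≤ (C_K²/(6m²))·‖w‖`. -/
theorem stmt_8 (κ κ10 κ01 κ20 κ11 κ02 : ℝ → ℝ → ℝ) (CK : ℝ)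
    (hker : IsC2KernelWith κ κ10 κ01 κ20 κ11 κ02 CK)
    (m : ℕ) (hm : 1 ≤ m)
    (A S : Matrix (Fin m) (Fin m) ℝ)
    (hA : ∀ i j : Fin m, A i j = κ (gridPt m ((i : ℕ) + 1)) (gridPt m ((j : ℕ) + 1)) / m)
    (hS : ∀ i j : Fin m, S i j =
      (1 / (m : ℝ)) * ∫ x in (0:ℝ)..1, κ x (gridPt m ((i : ℕ) + 1)) * κ x (gridPt m ((j : ℕ) + 1))) :
    ∀ w : Fin m → ℝ,
      Real.sqrt (∑ i, ((S - Aᵀ * A).mulVec w i) ^ 2)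
        ≤ CK ^ 2 / (6 * (m : ℝ) ^ 2) * Real.sqrt (∑ i, w i ^ 2) :=
  stmt_8_general κ κ10 κ01 κ20 κ11 κ02 CK hker m A S hA hS
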